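/- Let X and Y be real random variables with E[X] = θ, Var(X) = σ², Cov(X, Y) = γ, and E[Y²] < ∞. For c ∈ [0,1] consider the shrinkage estimator θ̂_c = cX + (1−c)Y and define CURE(θ̂_c) = (2c − 1)σ² + 2(1−c)γ + ((1−c)(X − Y))². Then CURE(θ̂_c) is an unbiased estimator of the quadratic risk of θ̂_c: E[CURE(θ̂_c)] = E[(θ̂_c − θ)²]. -/

import Mathlib

/-!
Write `θ̂_c = X - (1 - c) (X - Y)`. By the bias–variance decomposition, the risk of `θ̂_c` is
`Var θ̂_c + (1 - c)² (E[X - Y])²`, and expanding the variance by bilinearity of the covariance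
gives `σ² - 2 (1 - c) (σ² - γ) + (1 - c)² (Var (X - Y) + (E[X - Y])²)`. The last bracket is
`E[(X - Y)²]`, which is exactly the expectation of the random part of CURE.
-/

open MeasureTheory ProbabilityTheory

section

variable {Ω : Type*} [MeasurableSpace Ω] {μ : Measure Ω} [IsProbabilityMeasure μ]
  {X Y Z : Ω → ℝ}

lemma integral_sq_eq_variance_add_sq (hZ : MemLp Z 2 μ) :
    ∫ ω, Z ω ^ 2 ∂μ = Var[Z; μ] + μ[Z] ^ 2 := by
  rw [variance_eq_sub hZ]
  simp

lemma integral_sub_const_sq_eq_variance_add_sq (hZ : MemLp Z 2 μ) (t : ℝ) :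
    ∫ ω, (Z ω - t) ^ 2 ∂μ = Var[Z; μ] + (μ[Z] - t) ^ 2 := by
  rw [integral_sq_eq_variance_add_sq (Z := fun ω ↦ Z ω - t) (hZ.sub (memLp_const t)),
    variance_sub_const hZ.aestronglyMeasurable,
    integral_sub (hZ.integrable one_le_two) (integrable_const t), integral_const]
  simp

lemma variance_sub_const_mul (hX : MemLp X 2 μ) (hY : MemLp Y 2 μ) (a : ℝ) :
    Var[fun ω ↦ X ω - a * Y ω; μ] = Var[X; μ] - 2 * a * cov[X, Y; μ] + a ^ 2 * Var[Y; μ] := by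
  rw [variance_fun_sub hX (hY.const_mul a), covariance_const_mul_right, variance_const_mul]
  ring

theorem integral_shrinkage_sub_integral_sq (hX : MemLp X 2 μ) (hY : MemLp Y 2 μ) (c : ℝ) :
    ∫ ω, (c * X ω + (1 - c) * Y ω - μ[X]) ^ 2 ∂μ
      = (2 * c - 1) * Var[X; μ] + 2 * (1 - c) * cov[X, Y; μ]
        + (1 - c) ^ 2 * ∫ ω, (X ω - Y ω) ^ 2 ∂μ := by
  have hD : MemLp (fun ω ↦ X ω - Y ω) 2 μ := hX.sub hY
  have hZ : MemLp (fun ω ↦ X ω - (1 - c) * (X ω - Y ω)) 2 μ := hX.sub (hD.const_mul _)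
  have hsplit : ∀ ω, c * X ω + (1 - c) * Y ω = X ω - (1 - c) * (X ω - Y ω) := fun ω ↦ by ring
  simp_rw [hsplit]
  rw [integral_sub_const_sq_eq_variance_add_sq hZ, integral_sq_eq_variance_add_sq hD,
    variance_sub_const_mul hX hD, covariance_fun_sub_right hX hX hY,
    covariance_self hX.aemeasurable,
    integral_sub (hX.integrable one_le_two) ((hD.const_mul _).integrable one_le_two),
    integral_const_mul]
  ring

end

theorem cure_unbiased_general
    {Ω : Type*} [MeasurableSpace Ω] (μ : Measure Ω) [IsProbabilityMeasure μ]
    (X Y : Ω → ℝ)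
    (hX2 : MemLp X 2 μ) (hY2 : MemLp Y 2 μ)
    (θ σsq γ : ℝ)
    (hmean : ∫ ω, X ω ∂μ = θ)
    (hvar : variance X μ = σsq)
    (hcov : ∫ ω, (X ω - ∫ ω', X ω' ∂μ) * (Y ω - ∫ ω', Y ω' ∂μ) ∂μ = γ)
    (c : ℝ) :
    ∫ ω, ((2 * c - 1) * σsq + 2 * (1 - c) * γ + ((1 - c) * (X ω - Y ω)) ^ 2) ∂μ
      = ∫ ω, (c * X ω + (1 - c) * Y ω - θ) ^ 2 ∂μ := by
  have hcov' : cov[X, Y; μ] = γ := hcov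
  have hD2 : Integrable (fun ω ↦ (X ω - Y ω) ^ 2) μ := (hX2.sub hY2).integrable_sq
  simp_rw [mul_pow (1 - c)]
  rw [integral_add (integrable_const _) (hD2.const_mul _), integral_const, integral_const_mul,
    ← hmean, integral_shrinkage_sub_integral_sq hX2 hY2, hvar, hcov']
  simp

/-- **CURE is an unbiased risk estimate** (Theorem B.1).
Let `X, Y` be real random variables with `E[X] = θ`, `Var(X) = σ²`, `Cov(X, Y) = γ`, and
`E[Y²] < ∞`.  For `c ∈ [0,1]`, the shrinkage estimator `θ̂_c = c X + (1−c) Y` has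
`CURE(θ̂_c) = (2c − 1)σ² + 2(1−c)γ + ((1−c)(X − Y))²` as an unbiased estimator of its
quadratic risk: `E[CURE(θ̂_c)] = E[(θ̂_c − θ)²]`. -/
theorem cure_unbiased
    {Ω : Type*} [MeasurableSpace Ω] (μ : Measure Ω) [IsProbabilityMeasure μ]
    (X Y : Ω → ℝ) (hXm : Measurable X) (hYm : Measurable Y)
    (hX2 : MemLp X 2 μ) (hY2 : MemLp Y 2 μ)
    (θ σsq γ : ℝ)
    (hmean : ∫ ω, X ω ∂μ = θ)
    (hvar : variance X μ = σsq)
    (hcov : ∫ ω, (X ω - ∫ ω', X ω' ∂μ) * (Y ω - ∫ ω', Y ω' ∂μ) ∂μ = γ)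
    (c : ℝ) (hc0 : 0 ≤ c) (hc1 : c ≤ 1) :
    ∫ ω, ((2 * c - 1) * σsq + 2 * (1 - c) * γ + ((1 - c) * (X ω - Y ω)) ^ 2) ∂μ
      = ∫ ω, (c * X ω + (1 - c) * Y ω - θ) ^ 2 ∂μ :=
  cure_unbiased_general μ X Y hX2 hY2 θ σsq γ hmean hvar hcov c
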